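/- Under any weighted proportional sharing rule WPS^w with strictly positive weights, for every POT policy T ∈ Γ and every retailer i ∈ N, the following are equivalent: (1) there exists z ∈ ℤ_{>0} with f_i(2^{-z}·T_i; T_{-i}) < f_i(T_i; T_{-i}); (2) f_i(T_i/2; T_{-i}) < f_i(T_i; T_{-i}); (3) T_i > sqrt( 2·(K_i + (w_i / Σ_{j ∈ N[T_i/2;T_{-i}]} w_j)·K_0) / H_i ). -/
import Mathlib


open Finset

noncomputable section

/-- `t` is a power-of-two (POT) value with base period `B`. -/
def IsPOT (B t : ℝ) : Prop := ∃ z : ℤ, t = (2 : ℝ) ^ z * B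

/-- Membership of an interval `t` in retailer `i`'s strategy set `Γ_i`,
given major setup cost `K0`, minor setup cost `Ki` and holding parameter `Hi`. -/
def InStrategy (B K0 Ki Hi t : ℝ) : Prop :=
  IsPOT B t ∧ Real.sqrt (Ki / (2 * Hi)) ≤ t ∧ t ≤ Real.sqrt (2 * (K0 + Ki) / Hi)

/-- `N[τ; T_{-i}] = {i} ∪ {j : T j ≤ τ}`. -/
def grp {n : ℕ} (T : Fin n → ℝ) (i : Fin n) (τ : ℝ) : Finset (Fin n) :=
  insert i (Finset.univ.filter fun j => T j ≤ τ)

/-- The set of levels `L(T) = {T j : j ∈ N}`. -/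
def levels {n : ℕ} (T : Fin n → ℝ) : Finset ℝ := Finset.image T Finset.univ

/-- `1/τ⁺`: the inverse of the smallest level larger than `τ`, with the
convention that it is `0` when no larger level exists. -/
def invSucc (L : Finset ℝ) (τ : ℝ) : ℝ :=
  if h : (L.filter fun u => τ < u).Nonempty then 1 / (L.filter fun u => τ < u).min' h
  else 0

/-- Major-setup share `x_i(T)` of retailer `i` under the weighted proportional
sharing rule with weights `w` (intended for strictly positive weights). -/
def share {n : ℕ} (K0 : ℝ) (w T : Fin n → ℝ) (i : Fin n) : ℝ :=
  ∑ τ ∈ (levels T).filter (fun τ => T i ≤ τ),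
    (1 / τ - invSucc (levels T) τ) *
      (w i / ∑ j ∈ Finset.univ.filter (fun j => T j ≤ τ), w j) * K0

/-- Major-setup share for nonnegative weights: if the order group has total
weight zero, the major setup cost is split equally among its members. -/
def shareZ {n : ℕ} (K0 : ℝ) (w T : Fin n → ℝ) (i : Fin n) : ℝ :=
  ∑ τ ∈ (levels T).filter (fun τ => T i ≤ τ),
    (1 / τ - invSucc (levels T) τ) *
      (if 0 < ∑ j ∈ Finset.univ.filter (fun j => T j ≤ τ), w j
        then w i / ∑ j ∈ Finset.univ.filter (fun j => T j ≤ τ), w j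
        else 1 / ((Finset.univ.filter fun j => T j ≤ τ) : Finset (Fin n)).card) * K0

/-- Individual cost `f_i(T) = H_i T_i + K_i / T_i + x_i(T)` under `WPS^w`. -/
def indCost {n : ℕ} (K0 : ℝ) (K H w : Fin n → ℝ) (T : Fin n → ℝ) (i : Fin n) : ℝ :=
  H i * T i + K i / T i + share K0 w T i

/-- Individual cost under the zero-weight-tolerant sharing rule. -/
def indCostZ {n : ℕ} (K0 : ℝ) (K H w : Fin n → ℝ) (T : Fin n → ℝ) (i : Fin n) : ℝ :=
  H i * T i + K i / T i + shareZ K0 w T i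

/-- System cost `C(T)`. -/
def sysCost {n : ℕ} (K0 : ℝ) (K H : Fin n → ℝ) (T : Fin n → ℝ) : ℝ :=
  (∑ i, (H i * T i + K i / T i)) + K0 / (⨅ i, T i)

/-- Nash equilibrium of the game induced by `WPS^w`. -/
def IsNE {n : ℕ} (B K0 : ℝ) (K H w : Fin n → ℝ) (T : Fin n → ℝ) : Prop :=
  (∀ i, InStrategy B K0 (K i) (H i) (T i)) ∧
  ∀ i t, InStrategy B K0 (K i) (H i) t →
    indCost K0 K H w T i ≤ indCost K0 K H w (Function.update T i t) i

/-- Nash equilibrium for the zero-weight-tolerant sharing rule. -/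
def IsNEZ {n : ℕ} (B K0 : ℝ) (K H w : Fin n → ℝ) (T : Fin n → ℝ) : Prop :=
  (∀ i, InStrategy B K0 (K i) (H i) (T i)) ∧
  ∀ i t, InStrategy B K0 (K i) (H i) t →
    indCostZ K0 K H w T i ≤ indCostZ K0 K H w (Function.update T i t) i

/-- `s = min_{∅ ⊂ S ⊆ N} (K0 + Σ_{i∈S} K_i)/(Σ_{i∈S} H_i)`. -/
def sval (n : ℕ) (K0 : ℝ) (K H : Fin n → ℝ) : ℝ :=
  sInf ((fun S : Finset (Fin n) => (K0 + ∑ i ∈ S, K i) / ∑ i ∈ S, H i) '' {S | S.Nonempty})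

/-- `[b]_POT`: the POT value `a` with `b/√2 < a ≤ √2·b`. -/
def potRound (B b : ℝ) : ℝ := (2 : ℝ) ^ (round (Real.logb 2 (b / B))) * B

/-- The optimal centralized POT policy `T^c`. -/
def Tc (n : ℕ) (B K0 : ℝ) (K H : Fin n → ℝ) (i : Fin n) : ℝ :=
  if K i ≤ sval n K0 K H * H i then potRound B (Real.sqrt (sval n K0 K H))
  else potRound B (Real.sqrt (K i / H i))

end
lemma pot_pos {B t : ℝ} (hB : 0 < B) (h : IsPOT B t) : 0 < t := by
  obtain ⟨z, rfl⟩ := h; positivity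

lemma pot_gap {B u v : ℝ} (hB : 0 < B) (hu : IsPOT B u) (hv : IsPOT B v) :
    u ≤ v / 2 ∨ v ≤ u := by
  obtain ⟨a, rfl⟩ := hu
  obtain ⟨c, rfl⟩ := hv
  rcases lt_or_ge a c with h | h
  · left
    have h1 : (2:ℝ) ^ a ≤ (2:ℝ) ^ (c - 1) := zpow_le_zpow_right₀ one_le_two (by omega)
    have h2 : (2:ℝ) ^ (c - 1) = (2:ℝ) ^ c / 2 := zpow_sub_one₀ two_ne_zero c
    rw [h2] at h1
    calc (2:ℝ)^a * B ≤ ((2:ℝ)^c / 2) * B := by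
          exact mul_le_mul_of_nonneg_right h1 hB.le
      _ = (2:ℝ)^c * B / 2 := by ring
  · right
    exact mul_le_mul_of_nonneg_right (zpow_le_zpow_right₀ one_le_two h) hB.le

lemma invSucc_congr {L L' : Finset ℝ} {a b : ℝ}
    (h : (L.filter fun u => a < u) = (L'.filter fun u => b < u)) :
    invSucc L a = invSucc L' b := by
  unfold invSucc
  simp only [h]

lemma share_update_half {n : ℕ} (K0 : ℝ) (w T : Fin n → ℝ) (i : Fin n)
    (hpos : ∀ j, 0 < T j)
    (hgap : ∀ j, T j ≤ T i / 2 ∨ T i ≤ T j) :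
    share K0 w (Function.update T i (T i / 2)) i =
      share K0 w T i + 1 / T i * (w i / ∑ j ∈ grp T i (T i / 2), w j) * K0 := by
  have hτpos : 0 < T i := hpos i
  set τ := T i with hτdef
  set T' := Function.update T i (τ / 2) with hT'def
  have hT'i : T' i = τ / 2 := Function.update_self ..
  have hT'j : ∀ j, j ≠ i → T' j = T j := fun j hj => Function.update_of_ne hj _ _
  -- grp as a filter over T'
  have hgrp : grp T i (τ/2) = Finset.univ.filter (fun j => T' j ≤ τ/2) := by
    ext j
    by_cases hj : j = i
    · subst hj; simp [grp, hT'i]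
    · simp [grp, hj, hT'j j hj]
  -- weight groups agree at levels ≥ τ
  have hW : ∀ u, τ ≤ u →
      (Finset.univ.filter fun j => T' j ≤ u) = (Finset.univ.filter fun j => T j ≤ u) := by
    intro u hu
    ext j
    by_cases hj : j = i
    · subst hj
      simp only [mem_filter, mem_univ, true_and, hT'i]
      constructor <;> intro _ <;> linarith
    · simp [hT'j j hj]
  -- level sets above u agree for u ≥ τ
  have hLgt : ∀ u, τ ≤ u →
      ((levels T').filter fun v => u < v) = ((levels T).filter fun v => u < v) := by
    intro u hu
    ext v
    simp only [mem_filter, levels, mem_image, mem_univ, true_and]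
    constructor
    · rintro ⟨⟨j, rfl⟩, hv⟩
      by_cases hj : j = i
      · subst hj; rw [hT'i] at hv; exfalso; linarith
      · exact ⟨⟨j, (hT'j j hj).symm ▸ rfl⟩, hv⟩
    · rintro ⟨⟨j, rfl⟩, hv⟩
      by_cases hj : j = i
      · exfalso; rw [hj] at hv; exact absurd hv (not_lt.2 (le_of_eq rfl |>.trans hu)) 
      · exact ⟨⟨j, hT'j j hj⟩, hv⟩
  -- terms agree at levels ≥ τ
  have hterm : ∀ u, τ ≤ u →
      (1/u - invSucc (levels T') u) * (w i / ∑ j ∈ Finset.univ.filter (fun j => T' j ≤ u), w j) * K0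
    = (1/u - invSucc (levels T) u) * (w i / ∑ j ∈ Finset.univ.filter (fun j => T j ≤ u), w j) * K0 := by
    intro u hu
    rw [hW u hu, invSucc_congr (hLgt u hu)]
  have hτL : τ ∈ levels T := by
    simp only [levels, mem_image, mem_univ, true_and]; exact ⟨i, rfl⟩
  rw [hgrp]
  by_cases hcase : ∃ j, j ≠ i ∧ T j = τ
  · -- some other retailer has level τ
    obtain ⟨j₀, hj₀, hj₀τ⟩ := hcase
    have hτL' : τ ∈ levels T' := by
      simp only [levels, mem_image, mem_univ, true_and]
      exact ⟨j₀, by rw [hT'j j₀ hj₀, hj₀τ]⟩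
    have hA' : ((levels T').filter fun v => T' i ≤ v)
        = insert (τ/2) ((levels T).filter fun v => T i ≤ v) := by
      rw [hT'i]
      ext v
      simp only [mem_filter, mem_insert, levels, mem_image, mem_univ, true_and]
      constructor
      · rintro ⟨⟨j, rfl⟩, hv⟩
        by_cases hj : j = i
        · subst hj; left; rw [hT'i]
        · rw [hT'j j hj] at hv ⊢
          rcases hgap j with h | h
          · left; linarith
          · right; exact ⟨⟨j, rfl⟩, h⟩
      · rintro (rfl | ⟨⟨j, rfl⟩, hv⟩)
        · exact ⟨⟨i, hT'i⟩, le_refl _⟩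
        · by_cases hj : j = i
          · subst hj
            refine ⟨⟨j₀, by rw [hT'j j₀ hj₀, hj₀τ]⟩, by linarith⟩
          · exact ⟨⟨j, hT'j j hj⟩, by linarith⟩
    have hnm : τ/2 ∉ ((levels T).filter fun v => T i ≤ v) := by
      simp only [mem_filter, not_and]
      intro _ h; linarith
    have hinv : invSucc (levels T') (τ/2) = 1/τ := by
      have hmemf : τ ∈ (levels T').filter (fun u => τ/2 < u) :=
        mem_filter.2 ⟨hτL', by linarith⟩
      have hne : ((levels T').filter fun u => τ/2 < u).Nonempty := ⟨τ, hmemf⟩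
      have hmin : ((levels T').filter fun u => τ/2 < u).min' hne = τ := by
        apply le_antisymm (Finset.min'_le _ _ hmemf)
        apply Finset.le_min'
        intro v hv
        obtain ⟨hvL, hv2⟩ := mem_filter.1 hv
        simp only [levels, mem_image, mem_univ, true_and] at hvL
        obtain ⟨j, rfl⟩ := hvL
        by_cases hj : j = i
        · subst hj; rw [hT'i] at hv2 ⊢; exfalso; exact lt_irrefl _ hv2
        · rw [hT'j j hj] at hv2 ⊢
          rcases hgap j with h | h
          · exfalso; linarith
          · exact h
      unfold invSucc
      rw [dif_pos hne, hmin]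
    unfold share
    rw [hA', Finset.sum_insert hnm]
    have hsum : ∑ v ∈ (levels T).filter (fun v => T i ≤ v),
        (1/v - invSucc (levels T') v) * (w i / ∑ j ∈ Finset.univ.filter (fun j => T' j ≤ v), w j) * K0
      = ∑ v ∈ (levels T).filter (fun v => T i ≤ v),
        (1/v - invSucc (levels T) v) * (w i / ∑ j ∈ Finset.univ.filter (fun j => T j ≤ v), w j) * K0 := by
      apply Finset.sum_congr rfl
      intro v hv
      exact hterm v (mem_filter.1 hv).2
    rw [hsum, hinv]
    have h2 : 1/(τ/2) = 2/τ := by rw [one_div_div]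
    rw [h2]
    ring
  · -- no other retailer has level τ
    push_neg at hcase
    set C := (levels T).filter (fun v => τ < v) with hCdef
    have hA : ((levels T).filter fun v => T i ≤ v) = insert τ C := by
      ext v
      simp only [mem_filter, mem_insert, hCdef]
      constructor
      · rintro ⟨hvL, hv⟩
        rcases eq_or_lt_of_le hv with h | h
        · left; exact h.symm
        · right; exact ⟨hvL, h⟩
      · rintro (rfl | ⟨hvL, h⟩)
        · exact ⟨hτL, le_refl _⟩
        · exact ⟨hvL, h.le⟩
    have hA' : ((levels T').filter fun v => T' i ≤ v) = insert (τ/2) C := by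
      rw [hT'i]
      ext v
      simp only [mem_filter, mem_insert, hCdef, mem_filter, levels, mem_image, mem_univ, true_and]
      constructor
      · rintro ⟨⟨j, rfl⟩, hv⟩
        by_cases hj : j = i
        · subst hj; left; rw [hT'i]
        · rw [hT'j j hj] at hv ⊢
          rcases hgap j with h | h
          · left; linarith
          · right
            rcases eq_or_lt_of_le h with he | he
            · exact absurd he.symm (hcase j hj)
            · exact ⟨⟨j, rfl⟩, he⟩
      · rintro (rfl | ⟨⟨j, rfl⟩, hv⟩)
        · exact ⟨⟨i, hT'i⟩, le_refl _⟩
        · by_cases hj : j = i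
          · exfalso; rw [hj] at hv; exact lt_irrefl _ hv
          · exact ⟨⟨j, hT'j j hj⟩, by linarith⟩
    have hτC : τ ∉ C := by
      simp only [hCdef, mem_filter, not_and]
      intro _; exact lt_irrefl _
    have hτ2C : τ/2 ∉ C := by
      simp only [hCdef, mem_filter, not_and]
      intro _ h; linarith
    have hinv : invSucc (levels T') (τ/2) = invSucc (levels T) τ := by
      apply invSucc_congr
      ext v
      simp only [mem_filter, levels, mem_image, mem_univ, true_and]
      constructor
      · rintro ⟨⟨j, rfl⟩, hv⟩
        by_cases hj : j = i
        · subst hj; rw [hT'i] at hv; exfalso; exact lt_irrefl _ hv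
        · rw [hT'j j hj] at hv ⊢
          rcases hgap j with h | h
          · exfalso; linarith
          · rcases eq_or_lt_of_le h with he | he
            · exact absurd he.symm (hcase j hj)
            · exact ⟨⟨j, rfl⟩, he⟩
      · rintro ⟨⟨j, rfl⟩, hv⟩
        by_cases hj : j = i
        · exfalso; rw [hj] at hv; exact lt_irrefl _ hv
        · exact ⟨⟨j, hT'j j hj⟩, by linarith⟩
    have hWeq : (Finset.univ.filter fun j => T' j ≤ τ/2)
        = (Finset.univ.filter fun j => T j ≤ τ) := by
      ext j
      by_cases hj : j = i
      · subst hj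
        simp only [mem_filter, mem_univ, true_and, hT'i]
        constructor <;> intro _ <;> linarith
      · simp only [mem_filter, mem_univ, true_and, hT'j j hj]
        constructor
        · intro h; linarith
        · intro h
          rcases hgap j with h' | h'
          · exact h'
          · exact absurd (le_antisymm h h') (hcase j hj)
    unfold share
    rw [hA, hA', Finset.sum_insert hτC, Finset.sum_insert hτ2C]
    have hsum : ∑ v ∈ C,
        (1/v - invSucc (levels T') v) * (w i / ∑ j ∈ Finset.univ.filter (fun j => T' j ≤ v), w j) * K0
      = ∑ v ∈ C,
        (1/v - invSucc (levels T) v) * (w i / ∑ j ∈ Finset.univ.filter (fun j => T j ≤ v), w j) * K0 := by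
      apply Finset.sum_congr rfl
      intro v hv
      exact hterm v (le_of_lt (mem_filter.1 hv).2)
    rw [hsum, hinv, hWeq]
    have h2 : 1/(τ/2) = 2/τ := by rw [one_div_div]
    rw [h2]
    ring

lemma pot_zpow_mul {B t : ℝ} (z : ℤ) (h : IsPOT B t) : IsPOT B ((2:ℝ) ^ z * t) := by
  obtain ⟨a, rfl⟩ := h
  exact ⟨z + a, by rw [zpow_add₀ two_ne_zero, mul_assoc]⟩

lemma indCost_update_half {n : ℕ} (K0 : ℝ) (K H w T : Fin n → ℝ) (i : Fin n)
    (hpos : ∀ j, 0 < T j) (hgap : ∀ j, T j ≤ T i / 2 ∨ T i ≤ T j) :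
    indCost K0 K H w (Function.update T i (T i / 2)) i =
      indCost K0 K H w T i - H i * T i / 2
        + (K i + w i / (∑ j ∈ grp T i (T i / 2), w j) * K0) / T i := by
  have hτ : T i ≠ 0 := (hpos i).ne'
  unfold indCost
  rw [share_update_half K0 w T i hpos hgap, Function.update_self]
  have e1 : K i / (T i / 2) = K i / T i + K i / T i := by
    rw [div_div_eq_mul_div]; ring
  rw [e1, add_div, one_div_mul_eq_div]
  ring

lemma grp_pos {n : ℕ} (w T : Fin n → ℝ) (i : Fin n) (τ : ℝ) (hw : ∀ j, 0 < w j) :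
    0 < ∑ j ∈ grp T i τ, w j :=
  Finset.sum_pos (fun j _ => hw j) ⟨i, Finset.mem_insert_self _ _⟩

lemma iterate_ge {n : ℕ} (B K0 : ℝ) (K H w T : Fin n → ℝ) (hB : 0 < B)
    (hK0 : 0 < K0) (hK : ∀ i, 0 ≤ K i) (hH : ∀ i, 0 < H i) (hw : ∀ i, 0 < w i)
    (hT : ∀ j, IsPOT B (T j)) (i : Fin n)
    (h0 : indCost K0 K H w T i ≤ indCost K0 K H w (Function.update T i (T i / 2)) i) :
    ∀ m : ℕ, indCost K0 K H w T i ≤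
      indCost K0 K H w (Function.update T i ((2:ℝ) ^ (-(m:ℤ)) * T i)) i := by
  have hpos : ∀ j, 0 < T j := fun j => pot_pos hB (hT j)
  have hτpos : 0 < T i := hpos i
  have hgap : ∀ j, T j ≤ T i / 2 ∨ T i ≤ T j := fun j => pot_gap hB (hT j) (hT i)
  set W0 := ∑ j ∈ grp T i (T i / 2), w j with hW0def
  have hW0pos : 0 < W0 := grp_pos w T i _ hw
  have hd0 : H i * T i / 2 ≤ (K i + w i / W0 * K0) / T i := by
    rw [indCost_update_half K0 K H w T i hpos hgap] at h0
    linarith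
  intro m
  induction m with
  | zero =>
    have h1 : (2:ℝ) ^ (-((0:ℕ):ℤ)) * T i = T i := by norm_num
    rw [h1, Function.update_eq_self]
  | succ m ih =>
    set S := Function.update T i ((2:ℝ) ^ (-(m:ℤ)) * T i) with hSdef
    have hSi : S i = (2:ℝ) ^ (-(m:ℤ)) * T i := by
      rw [hSdef]; exact Function.update_self _ _ _
    have hSj : ∀ j, j ≠ i → S j = T j := fun j hj => Function.update_of_ne hj _ _
    have hSpot : ∀ j, IsPOT B (S j) := by
      intro j
      by_cases hj : j = i
      · rw [hj, hSi]; exact pot_zpow_mul _ (hT i)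
      · rw [hSj j hj]; exact hT j
    have hSpos : ∀ j, 0 < S j := fun j => pot_pos hB (hSpot j)
    have hSgap : ∀ j, S j ≤ S i / 2 ∨ S i ≤ S j := fun j => pot_gap hB (hSpot j) (hSpot i)
    have hpow1 : (2:ℝ) ^ (-(m:ℤ)) ≤ 1 := by
      have h := zpow_le_zpow_right₀ (one_le_two (α := ℝ)) (by omega : -(m:ℤ) ≤ 0)
      simpa using h
    have hpowpos : (0:ℝ) < (2:ℝ) ^ (-(m:ℤ)) := by positivity
    have hSile : S i ≤ T i := by
      rw [hSi]; nlinarith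
    have hupd : Function.update S i (S i / 2)
        = Function.update T i ((2:ℝ) ^ (-((m+1:ℕ):ℤ)) * T i) := by
      rw [hSdef, Function.update_idem, Function.update_self]
      congr 1
      have he : (-((m+1:ℕ):ℤ)) = -(m:ℤ) - 1 := by push_cast; ring
      rw [he, zpow_sub_one₀ two_ne_zero]
      ring
    have hkey := indCost_update_half K0 K H w S i hSpos hSgap
    rw [hupd] at hkey
    set Wm := ∑ j ∈ grp S i (S i / 2), w j with hWmdef
    have hWmpos : 0 < Wm := grp_pos w S i _ hw
    have hWmle : Wm ≤ W0 := by
      apply Finset.sum_le_sum_of_subset_of_nonneg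
      · intro j hj
        rcases Finset.mem_insert.1 hj with rfl | hj'
        · exact Finset.mem_insert_self _ _
        · obtain ⟨-, hle⟩ := Finset.mem_filter.1 hj'
          by_cases hji : j = i
          · subst hji; exact Finset.mem_insert_self _ _
          · apply Finset.mem_insert_of_mem
            apply Finset.mem_filter.2
            refine ⟨Finset.mem_univ _, ?_⟩
            rw [hSj j hji] at hle
            have h3 : S i / 2 ≤ T i / 2 := by linarith
            linarith
      · intro j _ _; exact (hw j).le
    have hfrac : w i / W0 ≤ w i / Wm := by
      gcongr
      exact (hw i).le
    have hstep : H i * S i / 2 ≤ (K i + w i / Wm * K0) / S i := by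
      have h1 : H i * S i / 2 ≤ H i * T i / 2 := by
        have := hH i
        nlinarith
      have h5 : 0 < w i / Wm * K0 := mul_pos (div_pos (hw i) hWmpos) hK0
      have h4 : w i / W0 * K0 ≤ w i / Wm * K0 :=
        mul_le_mul_of_nonneg_right hfrac hK0.le
      have h2 : (K i + w i / W0 * K0) / T i ≤ (K i + w i / Wm * K0) / S i := by
        apply div_le_div₀ (by linarith [hK i]) (by linarith) (hSpos i) hSile
      linarith
    calc indCost K0 K H w T i ≤ indCost K0 K H w S i := ih
      _ ≤ indCost K0 K H w (Function.update T i ((2:ℝ) ^ (-((m+1:ℕ):ℤ)) * T i)) i := by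
          rw [hkey]
          have := hSpos i
          linarith

theorem statement2 {n : ℕ} (B K0 : ℝ) (K H w T : Fin n → ℝ)
    (hB : 0 < B) (hK0 : 0 < K0) (hK : ∀ i, 0 ≤ K i) (hH : ∀ i, 0 < H i)
    (hw : ∀ i, 0 < w i)
    (hT : ∀ j, InStrategy B K0 (K j) (H j) (T j)) (i : Fin n) :
    List.TFAE
      [∃ z : ℤ, 0 < z ∧
          indCost K0 K H w (Function.update T i ((2 : ℝ) ^ (-z) * T i)) i < indCost K0 K H w T i,
        indCost K0 K H w (Function.update T i (T i / 2)) i < indCost K0 K H w T i,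
        Real.sqrt (2 * (K i + w i / (∑ j ∈ grp T i (T i / 2), w j) * K0) / H i) < T i] := by
  have hpot : ∀ j, IsPOT B (T j) := fun j => (hT j).1
  have hpos : ∀ j, 0 < T j := fun j => pot_pos hB (hpot j)
  have hgap : ∀ j, T j ≤ T i / 2 ∨ T i ≤ T j := fun j => pot_gap hB (hpot j) (hpot i)
  have hτpos : 0 < T i := hpos i
  have hW0pos : 0 < ∑ j ∈ grp T i (T i / 2), w j := grp_pos w T i _ hw
  have hkey := indCost_update_half K0 K H w T i hpos hgap
  have h23 : (indCost K0 K H w (Function.update T i (T i / 2)) i < indCost K0 K H w T i)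
      ↔ Real.sqrt (2 * (K i + w i / (∑ j ∈ grp T i (T i / 2), w j) * K0) / H i) < T i := by
    rw [hkey, Real.sqrt_lt' hτpos]
    constructor
    · intro h
      rw [div_lt_iff₀ (hH i)]
      have h' : (K i + w i / (∑ j ∈ grp T i (T i / 2), w j) * K0) / T i < H i * T i / 2 := by
        linarith
      rw [div_lt_iff₀ hτpos] at h'
      nlinarith
    · intro h
      rw [div_lt_iff₀ (hH i)] at h
      have h' : (K i + w i / (∑ j ∈ grp T i (T i / 2), w j) * K0) / T i < H i * T i / 2 := by
        rw [div_lt_iff₀ hτpos]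
        nlinarith
      linarith
  tfae_have 2 → 1 := by
    intro h2
    refine ⟨1, one_pos, ?_⟩
    have he : (2:ℝ) ^ (-(1:ℤ)) * T i = T i / 2 := by
      rw [zpow_neg, zpow_one]; ring
    rw [he]; exact h2
  tfae_have 1 → 2 := by
    rintro ⟨z, hz, hlt⟩
    by_contra h2
    push_neg at h2
    have hit := iterate_ge B K0 K H w T hB hK0 hK hH hw hpot i h2 z.toNat
    rw [show (-(z.toNat:ℤ)) = -z by rw [Int.toNat_of_nonneg hz.le]] at hit
    linarith
  tfae_have 2 ↔ 3 := h23
  tfae_finish
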